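/- For every integer I_0 ≥ 1 there exist real constants C_0, …, C_{I_0 - 1} such that for every smooth function v : ℝ × ℝⁿ → ℝ satisfying □_g v - ∂_t v = 0 everywhere, one has □_g(∂_t^{I_0} v) - ∂_t(∂_t^{I_0} v) = e^{-t} Σ_{i=1}^n Σ_{M=0}^{I_0 - 1} C_M ∂_t^M ∂_{x_i}² v everywhere. -/

import Mathlib

open Real MeasureTheory

/-- Time derivative ∂ₜ of a function on ℝ × ℝⁿ. -/
noncomputable def pT (n : ℕ) (φ : ℝ × (Fin n → ℝ) → ℝ) : ℝ × (Fin n → ℝ) → ℝ :=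
  fun p => deriv (fun s => φ (s, p.2)) p.1

/-- Spatial derivative ∂ₓᵢ of a function on ℝ × ℝⁿ. -/
noncomputable def pX (n : ℕ) (i : Fin n) (φ : ℝ × (Fin n → ℝ) → ℝ) : ℝ × (Fin n → ℝ) → ℝ :=
  fun p => deriv (fun s => φ (p.1, Function.update p.2 i s)) (p.2 i)

/-- Mixed spatial derivative D^I = ∂ₓ₁^{I₁} ⋯ ∂ₓₙ^{Iₙ}. -/
noncomputable def Dmix (n : ℕ) (I : Fin n → ℕ) (φ : ℝ × (Fin n → ℝ) → ℝ) : ℝ × (Fin n → ℝ) → ℝ :=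
  (List.ofFn (fun i : Fin n => (pX n i)^[I i])).foldr (· ∘ ·) id φ

/-- The de Sitter wave operator □_g φ = -∂ₜ²φ - (n/2)∂ₜφ + e^{-t} Σᵢ ∂ₓᵢ²φ. -/
noncomputable def dBox (n : ℕ) (φ : ℝ × (Fin n → ℝ) → ℝ) : ℝ × (Fin n → ℝ) → ℝ :=
  fun p => -(pT n (pT n φ) p) - ((n : ℝ) / 2) * pT n φ p
    + Real.exp (-p.1) * ∑ i : Fin n, pX n i (pX n i φ) p

/-- The de Sitter null form Q(φ,ψ) = -φₜψₜ + e^{-t} Σᵢ φᵢψᵢ. -/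
noncomputable def nullQ (n : ℕ) (φ ψ : ℝ × (Fin n → ℝ) → ℝ) : ℝ × (Fin n → ℝ) → ℝ :=
  fun p => -(pT n φ p) * pT n ψ p + Real.exp (-p.1) * ∑ i : Fin n, pX n i φ p * pX n i ψ p

/-!
Write `L = □_g - ∂ₜ` and `Δ = Σᵢ ∂ₓᵢ²`. Since `∂ₜ` commutes with every `∂ₓᵢ` (Schwarz) and
`∂ₜ (e^{-t} f) = e^{-t} (∂ₜ - 1) f`, one has the commutator identity `L ∂ₜ = ∂ₜ L + e^{-t} Δ`.
So if `L v = 0`, induction on `I` gives `L ∂ₜ^I v = e^{-t} P_I(∂ₜ) Δ v` with `P_0 = 0` and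
`P_{I+1} = (X - 1) P_I + X^I`, that is `P_I = X^I - (X - 1)^I`, a polynomial of degree `< I`:
the constants `C_M` are its coefficients.
-/

open Polynomial
open scoped ContDiff

section DirectionalDerivative

variable {E F : Type*} [NormedAddCommGroup E] [NormedSpace ℝ E]
  [NormedAddCommGroup F] [NormedSpace ℝ F]

theorem ContDiff.fderiv_apply_const {f : E → F} (hf : ContDiff ℝ ∞ f) (w : E) :
    ContDiff ℝ ∞ (fun x => fderiv ℝ f x w) :=
  (hf.fderiv_right le_rfl).clm_apply contDiff_const

theorem fderiv_fderiv_apply_comm {f : E → F} (hf : ContDiff ℝ 2 f) (x v w : E) :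
    fderiv ℝ (fun y => fderiv ℝ f y v) x w = fderiv ℝ (fun y => fderiv ℝ f y w) x v := by
  have h := VectorField.fderiv_apply_lieBracket (V := fun _ => w) (W := fun _ => v)
    (hf.contDiffAt (x := x)) (by simp) (differentiableAt_const v) (differentiableAt_const w)
  simp only [VectorField.lieBracket, fderiv_const_apply, zero_apply, sub_self, map_zero] at h
  exact sub_eq_zero.mp h.symm

end DirectionalDerivative

theorem HasDerivAt.exp_neg_mul {f : ℝ → ℝ} {f' t : ℝ} (hf : HasDerivAt f f' t) :
    HasDerivAt (fun s => Real.exp (-s) * f s) (Real.exp (-t) * (f' - f t)) t := by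
  rw [show Real.exp (-t) * (f' - f t) = Real.exp (-t) * -1 * f t + Real.exp (-t) * f' by ring]
  exact (hasDerivAt_neg' (x := t)).exp.mul hf

theorem coeff_X_pow_sub_X_sub_one_pow_self (I : ℕ) :
    (X ^ I - (X - 1) ^ I : ℝ[X]).coeff I = 0 := by
  have h : (X - 1 : ℝ[X]) = X + C (-1) := by simp [sub_eq_add_neg]
  rw [coeff_sub, coeff_X_pow_self, h, coeff_X_add_C_pow]
  simp

theorem sum_coeff_X_pow_sub_X_sub_one_pow_succ (I : ℕ) (g : ℕ → ℝ) :
    ∑ M ∈ Finset.range (I + 1), (X ^ (I + 1) - (X - 1) ^ (I + 1) : ℝ[X]).coeff M * g M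
      = ∑ M ∈ Finset.range I, (X ^ I - (X - 1) ^ I : ℝ[X]).coeff M * g (M + 1)
        - ∑ M ∈ Finset.range I, (X ^ I - (X - 1) ^ I : ℝ[X]).coeff M * g M + g I := by
  set P : ℝ[X] := X ^ I - (X - 1) ^ I
  have hrec : (X ^ (I + 1) - (X - 1) ^ (I + 1) : ℝ[X]) = X * P - P + X ^ I := by ring
  have hXP : ∑ M ∈ Finset.range (I + 1), (X * P).coeff M * g M
      = ∑ M ∈ Finset.range I, P.coeff M * g (M + 1) := by
    simp [Finset.sum_range_succ', coeff_X_mul]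
  have hP : ∑ M ∈ Finset.range (I + 1), P.coeff M * g M
      = ∑ M ∈ Finset.range I, P.coeff M * g M := by
    rw [Finset.sum_range_succ, coeff_X_pow_sub_X_sub_one_pow_self, zero_mul, add_zero]
  have hXI : ∑ M ∈ Finset.range (I + 1), (X ^ I : ℝ[X]).coeff M * g M = g I := by
    simp [coeff_X_pow]
  rw [hrec]
  simp only [coeff_add, coeff_sub, add_mul, sub_mul, Finset.sum_add_distrib, Finset.sum_sub_distrib,
    hXP, hP, hXI]

section WaveOperator

variable {n : ℕ} {φ : ℝ × (Fin n → ℝ) → ℝ}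

theorem pT_eq_fderiv (hφ : Differentiable ℝ φ) : pT n φ = fun p => fderiv ℝ φ p (1, 0) :=
  funext fun p => ((hφ p).hasFDerivAt.comp_hasDerivAt p.1
    ((hasDerivAt_id p.1).prodMk (hasDerivAt_const p.1 p.2))).deriv

theorem pX_eq_fderiv (hφ : Differentiable ℝ φ) (i : Fin n) :
    pX n i φ = fun p => fderiv ℝ φ p (0, Pi.single i 1) := by
  funext p
  have hφp : HasFDerivAt φ (fderiv ℝ φ p) (p.1, Function.update p.2 i (p.2 i)) := by
    rw [Function.update_eq_self]
    exact (hφ p).hasFDerivAt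
  exact (hφp.comp_hasDerivAt (p.2 i)
    ((hasDerivAt_const (p.2 i) p.1).prodMk (hasDerivAt_update p.2 i (p.2 i)))).deriv

theorem contDiff_pT (hφ : ContDiff ℝ ∞ φ) : ContDiff ℝ ∞ (pT n φ) := by
  rw [pT_eq_fderiv (hφ.differentiable (by simp))]
  exact hφ.fderiv_apply_const _

theorem contDiff_pX (hφ : ContDiff ℝ ∞ φ) (i : Fin n) : ContDiff ℝ ∞ (pX n i φ) := by
  rw [pX_eq_fderiv (hφ.differentiable (by simp))]
  exact hφ.fderiv_apply_const _

theorem contDiff_iterate_pT (hφ : ContDiff ℝ ∞ φ) (k : ℕ) : ContDiff ℝ ∞ ((pT n)^[k] φ) := by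
  induction k with
  | zero => exact hφ
  | succ k ih => rw [Function.iterate_succ_apply']; exact contDiff_pT ih

theorem pT_pX_comm (hφ : ContDiff ℝ ∞ φ) (i : Fin n) : pT n (pX n i φ) = pX n i (pT n φ) := by
  have hd : ∀ {ψ : ℝ × (Fin n → ℝ) → ℝ}, ContDiff ℝ ∞ ψ → Differentiable ℝ ψ :=
    fun h => h.differentiable (by simp)
  rw [pT_eq_fderiv (hd (contDiff_pX hφ i)), pX_eq_fderiv (hd (contDiff_pT hφ)),
    pX_eq_fderiv (hd hφ), pT_eq_fderiv (hd hφ)]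
  exact funext fun p => fderiv_fderiv_apply_comm (hφ.of_le ENat.LEInfty.out) p _ _

theorem pX_pX_iterate_pT (hφ : ContDiff ℝ ∞ φ) (i : Fin n) (k : ℕ) :
    pX n i (pX n i ((pT n)^[k] φ)) = (pT n)^[k] (pX n i (pX n i φ)) := by
  induction k with
  | zero => rfl
  | succ k ih =>
    have hk := contDiff_iterate_pT hφ k
    rw [Function.iterate_succ_apply', Function.iterate_succ_apply', ← ih, ← pT_pX_comm hk,
      ← pT_pX_comm (contDiff_pX hk i)]

theorem hasDerivAt_pT (hφ : Differentiable ℝ φ) (p : ℝ × (Fin n → ℝ)) :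
    HasDerivAt (fun s => φ (s, p.2)) (pT n φ p) p.1 :=
  (hφ.comp (differentiable_id.prodMk (differentiable_const p.2)) p.1).hasDerivAt

theorem dBox_sub_pT_pT (hφ : ContDiff ℝ ∞ φ) (p : ℝ × (Fin n → ℝ)) :
    dBox n (pT n φ) p - pT n (pT n φ) p
      = pT n (fun q => dBox n φ q - pT n φ q) p + exp (-p.1) * ∑ i, pX n i (pX n i φ) p := by
  have hT : ∀ {ψ : ℝ × (Fin n → ℝ) → ℝ}, ContDiff ℝ ∞ ψ →
      HasDerivAt (fun s => ψ (s, p.2)) (pT n ψ p) p.1 :=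
    fun h => hasDerivAt_pT (h.differentiable (by simp)) p
  have hT2 := hT (contDiff_pT hφ)
  have hΔ := HasDerivAt.exp_neg_mul
    (HasDerivAt.fun_sum (u := Finset.univ) fun i _ => hT (contDiff_pX (contDiff_pX hφ i) i))
  have hL := (((hT (contDiff_pT (contDiff_pT hφ))).neg.sub (hT2.const_mul ((n : ℝ) / 2))).add
    hΔ).sub hT2
  rw [show pT n (fun q => dBox n φ q - pT n φ q) p = _ from hL.deriv]
  have hcomm (i : Fin n) : pX n i (pX n i (pT n φ)) = pT n (pX n i (pX n i φ)) :=
    pX_pX_iterate_pT hφ i 1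
  simp only [dBox, hcomm]
  ring

theorem dBox_sub_pT_iterate_pT {v : ℝ × (Fin n → ℝ) → ℝ} (hv : ContDiff ℝ ∞ v)
    (hsol : ∀ p, dBox n v p - pT n v p = 0) (I : ℕ) (p : ℝ × (Fin n → ℝ)) :
    dBox n ((pT n)^[I] v) p - pT n ((pT n)^[I] v) p
      = exp (-p.1) * ∑ i, ∑ M ∈ Finset.range I,
          (X ^ I - (X - 1) ^ I : ℝ[X]).coeff M * (pT n)^[M] (pX n i (pX n i v)) p := by
  induction I generalizing p with
  | zero => simp [hsol p]
  | succ I ih =>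
    set c : ℕ → ℝ := fun M => (X ^ I - (X - 1) ^ I : ℝ[X]).coeff M
    set g : Fin n → ℕ → ℝ × (Fin n → ℝ) → ℝ := fun i M => (pT n)^[M] (pX n i (pX n i v))
    have hg (i : Fin n) (M : ℕ) : HasDerivAt (fun s => g i M (s, p.2)) (g i (M + 1) p) p.1 := by
      rw [show g i (M + 1) = pT n (g i M) from Function.iterate_succ_apply' _ _ _]
      exact hasDerivAt_pT
        ((contDiff_iterate_pT (contDiff_pX (contDiff_pX hv i) i) M).differentiable (by simp)) p
    have hF : HasDerivAt (fun s => ∑ i, ∑ M ∈ Finset.range I, c M * g i M (s, p.2))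
        (∑ i, ∑ M ∈ Finset.range I, c M * g i (M + 1) p) p.1 :=
      HasDerivAt.fun_sum fun i _ => HasDerivAt.fun_sum fun M _ => (hg i M).const_mul (c M)
    rw [Function.iterate_succ_apply', dBox_sub_pT_pT (contDiff_iterate_pT hv I) p, funext ih,
      show pT n (fun q => exp (-q.1) * ∑ i, ∑ M ∈ Finset.range I, c M * g i M q) p = _
        from hF.exp_neg_mul.deriv]
    simp only [pX_pX_iterate_pT hv, sum_coeff_X_pow_sub_X_sub_one_pow_succ, Finset.sum_add_distrib,
      Finset.sum_sub_distrib]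
    ring

end WaveOperator

theorem stmt5_general (n : ℕ) (I0 : ℕ) :
    ∃ C : ℕ → ℝ, ∀ v : ℝ × (Fin n → ℝ) → ℝ, ContDiff ℝ (⊤ : ℕ∞) v →
      (∀ p : ℝ × (Fin n → ℝ), dBox n v p - pT n v p = 0) →
      ∀ p : ℝ × (Fin n → ℝ),
        dBox n ((pT n)^[I0] v) p - pT n ((pT n)^[I0] v) p
          = Real.exp (-p.1) *
              ∑ i : Fin n, ∑ M ∈ Finset.range I0, C M * (pT n)^[M] (pX n i (pX n i v)) p :=
  ⟨fun M => (X ^ I0 - (X - 1) ^ I0 : ℝ[X]).coeff M,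
    fun _ hv hsol => dBox_sub_pT_iterate_pT hv hsol I0⟩

/-- Higher-order time derivatives of a solution of `□_gv - vₜ = 0` satisfy
`□_g(∂ₜ^{I₀}v) - ∂ₜ(∂ₜ^{I₀}v) = e^{-t} Σᵢ Σ_{M<I₀} C_M ∂ₜ^M ∂ₓᵢ² v`. -/
theorem stmt5 (n : ℕ) (hn : 1 ≤ n) (I0 : ℕ) (hI0 : 1 ≤ I0) :
    ∃ C : ℕ → ℝ, ∀ v : ℝ × (Fin n → ℝ) → ℝ, ContDiff ℝ (⊤ : ℕ∞) v →
      (∀ p : ℝ × (Fin n → ℝ), dBox n v p - pT n v p = 0) →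
      ∀ p : ℝ × (Fin n → ℝ),
        dBox n ((pT n)^[I0] v) p - pT n ((pT n)^[I0] v) p
          = Real.exp (-p.1) *
              ∑ i : Fin n, ∑ M ∈ Finset.range I0, C M * (pT n)^[M] (pX n i (pX n i v)) p :=
  stmt5_general n I0
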